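/- Let ρ_i(w, e) be the row-block matrix whose blocks are w_γ e^{(t(γ))} over all paths γ (including trivial) with head i, for a framed representation (w,e) of a quiver without oriented cycles (so there are finitely many paths), and let H_i = ρ_i ρ_i*. Then ρ_i(g·(w,e)) = g_i ρ_i(w,e), and hence H_i(g·(w,e)) = g_i H_i(w,e) g_i* and H_i⁻¹ transforms as (g_i*)⁻¹ H_i⁻¹ g_i⁻¹. -/
import Mathlib

open Matrix

theorem H_equivariance
    {Q₀ : Type*} (d n : Q₀ → ℕ) (i : Q₀)
    {ι : Type*} [Fintype ι] (tγ : ι → Q₀)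
    (w : (γ : ι) → Matrix (Fin (d i)) (Fin (d (tγ γ))) ℂ)
    (e : ∀ v : Q₀, Matrix (Fin (d v)) (Fin (n v)) ℂ)
    (g : ∀ v : Q₀, Matrix.GeneralLinearGroup (Fin (d v)) ℂ) :
    -- ρ_i transforms blockwise as g_i · ρ_i
    (∀ γ : ι,
      ((g i : Matrix (Fin (d i)) (Fin (d i)) ℂ) * w γ *
          (((g (tγ γ))⁻¹ : Matrix.GeneralLinearGroup (Fin (d (tγ γ))) ℂ) :
            Matrix (Fin (d (tγ γ))) (Fin (d (tγ γ))) ℂ)) *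
        ((g (tγ γ) : Matrix (Fin (d (tγ γ))) (Fin (d (tγ γ))) ℂ) * e (tγ γ)) =
      (g i : Matrix (Fin (d i)) (Fin (d i)) ℂ) * (w γ * e (tγ γ))) ∧
    -- H_i(g·(w,e)) = g_i H_i(w,e) g_i*
    (∑ γ : ι,
        (((g i : Matrix (Fin (d i)) (Fin (d i)) ℂ) * w γ *
              (((g (tγ γ))⁻¹ : Matrix.GeneralLinearGroup (Fin (d (tγ γ))) ℂ) :
                Matrix (Fin (d (tγ γ))) (Fin (d (tγ γ))) ℂ)) *
            ((g (tγ γ) : Matrix (Fin (d (tγ γ))) (Fin (d (tγ γ))) ℂ) * e (tγ γ))) *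
          ((((g i : Matrix (Fin (d i)) (Fin (d i)) ℂ) * w γ *
              (((g (tγ γ))⁻¹ : Matrix.GeneralLinearGroup (Fin (d (tγ γ))) ℂ) :
                Matrix (Fin (d (tγ γ))) (Fin (d (tγ γ))) ℂ)) *
            ((g (tγ γ) : Matrix (Fin (d (tγ γ))) (Fin (d (tγ γ))) ℂ) * e (tγ γ)))ᴴ) =
      (g i : Matrix (Fin (d i)) (Fin (d i)) ℂ) *
        (∑ γ : ι, (w γ * e (tγ γ)) * (w γ * e (tγ γ))ᴴ) *
        (g i : Matrix (Fin (d i)) (Fin (d i)) ℂ)ᴴ) ∧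
    -- H_i⁻¹ transforms as (g_i*)⁻¹ H_i⁻¹ g_i⁻¹
    (IsUnit (∑ γ : ι, (w γ * e (tγ γ)) * (w γ * e (tγ γ))ᴴ) →
      ((g i : Matrix (Fin (d i)) (Fin (d i)) ℂ) *
          (∑ γ : ι, (w γ * e (tγ γ)) * (w γ * e (tγ γ))ᴴ) *
          (g i : Matrix (Fin (d i)) (Fin (d i)) ℂ)ᴴ)⁻¹ =
        (((g i)⁻¹ : Matrix.GeneralLinearGroup (Fin (d i)) ℂ) :
            Matrix (Fin (d i)) (Fin (d i)) ℂ)ᴴ *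
          (∑ γ : ι, (w γ * e (tγ γ)) * (w γ * e (tγ γ))ᴴ)⁻¹ *
          (((g i)⁻¹ : Matrix.GeneralLinearGroup (Fin (d i)) ℂ) :
            Matrix (Fin (d i)) (Fin (d i)) ℂ)) := by
  have hblock : ∀ γ : ι,
      ((g i : Matrix (Fin (d i)) (Fin (d i)) ℂ) * w γ *
          (((g (tγ γ))⁻¹ : Matrix.GeneralLinearGroup (Fin (d (tγ γ))) ℂ) :
            Matrix (Fin (d (tγ γ))) (Fin (d (tγ γ))) ℂ)) *
        ((g (tγ γ) : Matrix (Fin (d (tγ γ))) (Fin (d (tγ γ))) ℂ) * e (tγ γ)) =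
      (g i : Matrix (Fin (d i)) (Fin (d i)) ℂ) * (w γ * e (tγ γ)) := by
    intro γ
    have h1 : (((g (tγ γ))⁻¹ : Matrix.GeneralLinearGroup (Fin (d (tγ γ))) ℂ) :
        Matrix (Fin (d (tγ γ))) (Fin (d (tγ γ))) ℂ) *
        (g (tγ γ) : Matrix (Fin (d (tγ γ))) (Fin (d (tγ γ))) ℂ) = 1 :=
      (g (tγ γ)).inv_mul
    rw [Matrix.mul_assoc ((g i : Matrix (Fin (d i)) (Fin (d i)) ℂ) * w γ),
      ← Matrix.mul_assoc (((g (tγ γ))⁻¹ : Matrix.GeneralLinearGroup (Fin (d (tγ γ))) ℂ) :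
        Matrix (Fin (d (tγ γ))) (Fin (d (tγ γ))) ℂ), h1, Matrix.one_mul, Matrix.mul_assoc]
  have hH : (∑ γ : ι,
        (((g i : Matrix (Fin (d i)) (Fin (d i)) ℂ) * w γ *
              (((g (tγ γ))⁻¹ : Matrix.GeneralLinearGroup (Fin (d (tγ γ))) ℂ) :
                Matrix (Fin (d (tγ γ))) (Fin (d (tγ γ))) ℂ)) *
            ((g (tγ γ) : Matrix (Fin (d (tγ γ))) (Fin (d (tγ γ))) ℂ) * e (tγ γ))) *
          ((((g i : Matrix (Fin (d i)) (Fin (d i)) ℂ) * w γ *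
              (((g (tγ γ))⁻¹ : Matrix.GeneralLinearGroup (Fin (d (tγ γ))) ℂ) :
                Matrix (Fin (d (tγ γ))) (Fin (d (tγ γ))) ℂ)) *
            ((g (tγ γ) : Matrix (Fin (d (tγ γ))) (Fin (d (tγ γ))) ℂ) * e (tγ γ)))ᴴ) =
      (g i : Matrix (Fin (d i)) (Fin (d i)) ℂ) *
        (∑ γ : ι, (w γ * e (tγ γ)) * (w γ * e (tγ γ))ᴴ) *
        (g i : Matrix (Fin (d i)) (Fin (d i)) ℂ)ᴴ) := by
    simp only [hblock]
    simp only [Matrix.conjTranspose_mul, Finset.mul_sum, Finset.sum_mul, Matrix.mul_assoc]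
  refine ⟨hblock, hH, fun hu => ?_⟩
  rw [Matrix.mul_inv_rev, Matrix.mul_inv_rev, Matrix.coe_units_inv,
    Matrix.conjTranspose_nonsing_inv]
  simp only [Matrix.mul_assoc]
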